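/- arXiv:1509.02496 — 3 statements merged into one kernel-verified Lean document; each statement's English description precedes it below -/
import Mathlib

section
/- Define I⁰(γ) = (4/3)³ · (4γ/9)^(γ/3) / (1 - γ/9)^(3 + γ/3) · ((1 - √γ/3)/(1 + √γ/3))^(2√γ). Then I⁰ is strictly decreasing on the interval [1.5, 1.7]. -/
open Real

noncomputable def I0 (γ : ℝ) : ℝ :=
  (4 / 3) ^ (3 : ℕ) * (4 * γ / 9) ^ (γ / 3) / (1 - γ / 9) ^ (3 + γ / 3) *
    ((1 - Real.sqrt γ / 3) / (1 + Real.sqrt γ / 3)) ^ (2 * Real.sqrt γ)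

noncomputable def gAux (x : ℝ) : ℝ :=
  3 * Real.log (4 / 3) + x / 3 * Real.log (4 * x / 9) - (3 + x / 3) * Real.log (1 - x / 9)
    + 2 * Real.sqrt x * (Real.log (3 - Real.sqrt x) - Real.log (3 + Real.sqrt x))

noncomputable def DAux (x : ℝ) : ℝ :=
  1 / 3 * Real.log (4 * x / 9) + 1 / 3 - 1 / 3 * Real.log (1 - x / 9) + (3 + x / 3) / (9 - x)
    + (Real.log (3 - Real.sqrt x) - Real.log (3 + Real.sqrt x)) / Real.sqrt x - 6 / (9 - x)

lemma log_ge_one_sub_inv {y : ℝ} (hy : 0 < y) : 1 - 1 / y ≤ Real.log y := by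
  have h := Real.log_le_sub_one_of_pos (show (0:ℝ) < 1 / y by positivity)
  rw [one_div, Real.log_inv] at h
  rw [one_div]
  linarith

lemma gAux_hasDerivAt {x : ℝ} (hx : x ∈ Set.Icc (1.5:ℝ) 1.7) : HasDerivAt gAux (DAux x) x := by
  obtain ⟨h1, h2⟩ := hx
  have hx0 : (0:ℝ) < x := by linarith
  set s := Real.sqrt x with hsdef
  have hs0 : 0 < s := Real.sqrt_pos.mpr hx0
  have hs2 : s * s = x := Real.mul_self_sqrt hx0.le
  have hsle : s ≤ 1.31 := by nlinarith [sq_nonneg (s - 1.31)]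
  have hs3 : s < 3 := by linarith
  have h19 : (0:ℝ) < 1 - x / 9 := by linarith
  have hA : HasDerivAt (fun y : ℝ => y / 3 * Real.log (4 * y / 9))
      (1 / 3 * Real.log (4 * x / 9) + x / 3 * ((4 / 9) / (4 * x / 9))) x := by
    have ha : HasDerivAt (fun y : ℝ => y / 3) (1 / 3) x := by
      simpa using (hasDerivAt_id x).div_const 3
    have hb : HasDerivAt (fun y : ℝ => 4 * y / 9) (4 / 9) x := by
      simpa using ((hasDerivAt_id x).const_mul (4:ℝ)).div_const 9
    have hc : HasDerivAt (fun y : ℝ => Real.log (4 * y / 9)) ((4 / 9) / (4 * x / 9)) x :=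
      hb.log (by positivity)
    exact ha.mul hc
  have hB : HasDerivAt (fun y : ℝ => (3 + y / 3) * Real.log (1 - y / 9))
      (1 / 3 * Real.log (1 - x / 9) + (3 + x / 3) * (-(1 / 9) / (1 - x / 9))) x := by
    have ha : HasDerivAt (fun y : ℝ => 3 + y / 3) (1 / 3) x := by
      simpa using ((hasDerivAt_id x).div_const 3).const_add 3
    have hb : HasDerivAt (fun y : ℝ => 1 - y / 9) (-(1 / 9)) x := by
      simpa using ((hasDerivAt_id x).div_const 9).const_sub 1
    have hc : HasDerivAt (fun y : ℝ => Real.log (1 - y / 9)) (-(1 / 9) / (1 - x / 9)) x :=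
      hb.log (ne_of_gt h19)
    exact ha.mul hc
  have hsd : HasDerivAt Real.sqrt (1 / (2 * s)) x := Real.hasDerivAt_sqrt (ne_of_gt hx0)
  have hC : HasDerivAt
      (fun y : ℝ => 2 * Real.sqrt y * (Real.log (3 - Real.sqrt y) - Real.log (3 + Real.sqrt y)))
      (2 * (1 / (2 * s)) * (Real.log (3 - s) - Real.log (3 + s))
        + 2 * s * (-(1 / (2 * s)) / (3 - s) - (1 / (2 * s)) / (3 + s))) x := by
    have hm : HasDerivAt (fun y : ℝ => 2 * Real.sqrt y) (2 * (1 / (2 * s))) x :=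
      hsd.const_mul 2
    have hu : HasDerivAt (fun y : ℝ => Real.log (3 - Real.sqrt y)) (-(1 / (2 * s)) / (3 - s)) x := by
      exact (hsd.const_sub 3).log (by intro h; nlinarith)
    have hv : HasDerivAt (fun y : ℝ => Real.log (3 + Real.sqrt y)) ((1 / (2 * s)) / (3 + s)) x := by
      exact (hsd.const_add 3).log (by positivity)
    exact hm.mul (hu.sub hv)
  have H := (((hasDerivAt_const x (3 * Real.log (4 / 3))).add hA).sub hB).add hC
  have hkey : DAux x = 0 + (1 / 3 * Real.log (4 * x / 9) + x / 3 * ((4 / 9) / (4 * x / 9)))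
      - (1 / 3 * Real.log (1 - x / 9) + (3 + x / 3) * (-(1 / 9) / (1 - x / 9)))
      + (2 * (1 / (2 * s)) * (Real.log (3 - s) - Real.log (3 + s))
        + 2 * s * (-(1 / (2 * s)) / (3 - s) - (1 / (2 * s)) / (3 + s))) := by
    unfold DAux
    rw [← hsdef, ← hs2]
    have e1 : (3:ℝ) - s ≠ 0 := by intro h; nlinarith
    have e2 : (3:ℝ) + s ≠ 0 := by positivity
    have e3 : s ≠ 0 := ne_of_gt hs0
    have e4 : (9:ℝ) - s * s ≠ 0 := by nlinarith
    have e5 : (1:ℝ) - s * s / 9 ≠ 0 := by intro h; apply e4; linarith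
    have e6 : (9:ℝ) - s ^ 2 ≠ 0 := by nlinarith
    field_simp
    ring
  rw [hkey]
  exact H

lemma DAux_neg {x : ℝ} (hx : x ∈ Set.Icc (1.5:ℝ) 1.7) : DAux x < 0 := by
  obtain ⟨h1, h2⟩ := hx
  have hx0 : (0:ℝ) < x := by linarith
  set s := Real.sqrt x with hsdef
  have hs0 : 0 < s := Real.sqrt_pos.mpr hx0
  have hs2 : s * s = x := Real.mul_self_sqrt hx0.le
  have hsle : s ≤ 1.31 := by nlinarith [sq_nonneg (s - 1.31)]
  have hs3 : s < 3 := by linarith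
  have h19 : (0:ℝ) < 1 - x / 9 := by linarith
  -- term 1
  have b1 : Real.log (4 * x / 9) ≤ 0 := Real.log_nonpos (by linarith) (by linarith)
  -- term 3
  have b3 : (-(0.234) : ℝ) ≤ Real.log (1 - x / 9) := by
    have h := log_ge_one_sub_inv h19
    have hb : 1 / (1 - x / 9) ≤ 1.234 := by
      rw [div_le_iff₀ h19]; linarith
    linarith
  -- term 4
  have b4 : (3 + x / 3) / (9 - x) ≤ 0.489 := by
    rw [div_le_iff₀ (by linarith : (0:ℝ) < 9 - x)]; linarith
  -- term 5
  have b5 : (Real.log (3 - s) - Real.log (3 + s)) / s ≤ -0.46 := by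
    have hy : (0:ℝ) < (3 + s) / (3 - s) := by
      apply div_pos <;> linarith
    have hlog := log_ge_one_sub_inv hy
    rw [Real.log_div (by positivity) (by intro h; nlinarith), one_div_div] at hlog
    have hdiff : Real.log (3 - s) - Real.log (3 + s) ≤ -(1 - (3 - s) / (3 + s)) := by linarith
    have hq : (3 - s) / (3 + s) ≤ 1 - 0.46 * s := by
      rw [div_le_iff₀ (by linarith : (0:ℝ) < 3 + s)]
      nlinarith
    rw [div_le_iff₀ hs0]
    linarith
  -- term 6
  have b6 : (0.8 : ℝ) ≤ 6 / (9 - x) := by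
    rw [le_div_iff₀ (by linarith : (0:ℝ) < 9 - x)]; linarith
  unfold DAux
  rw [← hsdef]
  linarith

lemma I0_eq_exp {γ : ℝ} (hγ : γ ∈ Set.Icc (1.5:ℝ) 1.7) : I0 γ = Real.exp (gAux γ) := by
  obtain ⟨h1, h2⟩ := hγ
  have hγ0 : (0:ℝ) < γ := by linarith
  set s := Real.sqrt γ with hsdef
  have hs0 : 0 < s := Real.sqrt_pos.mpr hγ0
  have hs2 : s * s = γ := Real.mul_self_sqrt hγ0.le
  have hsle : s ≤ 1.31 := by nlinarith [sq_nonneg (s - 1.31)]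
  have hs3 : s < 3 := by linarith
  have h19 : (0:ℝ) < 1 - γ / 9 := by linarith
  have hfrac : (1 - s / 3) / (1 + s / 3) = (3 - s) / (3 + s) := by
    rw [div_eq_div_iff (by positivity) (by positivity)]
    ring
  have e0 : ((4:ℝ) / 3) ^ (3:ℕ) = Real.exp (Real.log (4 / 3) * 3) := by
    rw [← Real.rpow_natCast ((4:ℝ)/3) 3, Real.rpow_def_of_pos (by norm_num)]
    norm_num
  have e1 : (4 * γ / 9) ^ (γ / 3) = Real.exp (Real.log (4 * γ / 9) * (γ / 3)) :=
    Real.rpow_def_of_pos (by positivity) _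
  have e2 : (1 - γ / 9) ^ (3 + γ / 3) = Real.exp (Real.log (1 - γ / 9) * (3 + γ / 3)) :=
    Real.rpow_def_of_pos h19 _
  have e3 : ((3 - s) / (3 + s)) ^ (2 * s) = Real.exp (Real.log ((3 - s) / (3 + s)) * (2 * s)) :=
    Real.rpow_def_of_pos (div_pos (by linarith) (by linarith)) _
  unfold I0 gAux
  rw [← hsdef, hfrac, e0, e1, e2, e3,
    Real.log_div (by intro h; nlinarith : (3:ℝ) - s ≠ 0) (by positivity : (3:ℝ) + s ≠ 0),
    ← Real.exp_add, ← Real.exp_sub, ← Real.exp_add]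
  congr 1
  ring

lemma gAux_strictAnti : StrictAntiOn gAux (Set.Icc (1.5:ℝ) 1.7) := by
  apply strictAntiOn_of_deriv_neg (convex_Icc _ _)
  · intro x hx
    exact (gAux_hasDerivAt hx).differentiableAt.continuousAt.continuousWithinAt
  · intro x hx
    rw [interior_Icc] at hx
    have hx' : x ∈ Set.Icc (1.5:ℝ) 1.7 := ⟨hx.1.le, hx.2.le⟩
    rw [(gAux_hasDerivAt hx').deriv]
    exact DAux_neg hx'

theorem stmt3 : StrictAntiOn I0 (Set.Icc 1.5 1.7) := by
  intro x hx y hy hxy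
  rw [I0_eq_exp hx, I0_eq_exp hy]
  exact Real.exp_lt_exp.mpr (gAux_strictAnti hx hy hxy)
end

section
/- For γ ∈ [1.5, 1.7], the expression (1/3)·ln(4γ/9) − 1/3 − (γ/3)·ln(1 − γ/9) + (9+γ)/(27−3γ) + (1/√γ)·ln(1 − √γ/3) − 1/(3−√γ) − (1/√γ)·ln(1 + √γ/3) − 1/(3+√γ) is negative. -/
open Real

set_option maxHeartbeats 1600000

theorem stmt4 (γ : ℝ) (hγ : γ ∈ Set.Icc (1.5 : ℝ) 1.7) :
    (1 / 3) * Real.log (4 * γ / 9) - 1 / 3 - (γ / 3) * Real.log (1 - γ / 9) +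
      (9 + γ) / (27 - 3 * γ) + (1 / Real.sqrt γ) * Real.log (1 - Real.sqrt γ / 3) -
      1 / (3 - Real.sqrt γ) - (1 / Real.sqrt γ) * Real.log (1 + Real.sqrt γ / 3) -
      1 / (3 + Real.sqrt γ) < 0 := by
  obtain ⟨h1, h2⟩ := hγ
  have hpos : (0:ℝ) < γ := by linarith
  set s := Real.sqrt γ with hs
  have hs2 : s ^ 2 = γ := Real.sq_sqrt hpos.le
  have hs0 : 0 ≤ s := Real.sqrt_nonneg γ
  have hslb : (1.2:ℝ) ≤ s := by nlinarith
  have hsub : s ≤ 1.31 := by nlinarith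
  have hspos : (0:ℝ) < s := by linarith
  -- log bounds
  have hl1 : Real.log (4 * γ / 9) ≤ 4 * γ / 9 - 1 :=
    Real.log_le_sub_one_of_pos (by linarith)
  have hp3 : (0:ℝ) < 1 - γ / 9 := by linarith
  have hl3 : 1 - (1 - γ / 9)⁻¹ ≤ Real.log (1 - γ / 9) :=
    Real.one_sub_inv_le_log_of_pos hp3
  have hp5 : (0:ℝ) < 1 - s / 3 := by linarith
  have hl5 : Real.log (1 - s / 3) ≤ - s / 3 := by
    have := Real.log_le_sub_one_of_pos hp5; linarith
  have hp7 : (0:ℝ) < 1 + s / 3 := by linarith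
  have hl7 : 1 - (1 + s / 3)⁻¹ ≤ Real.log (1 + s / 3) :=
    Real.one_sub_inv_le_log_of_pos hp7
  -- Term 1
  have hT1 : (1/3) * Real.log (4 * γ / 9) ≤ (1/3) * (4 * γ / 9 - 1) := by linarith
  -- Term 3 : -(γ/3) * log(1-γ/9) ≤ (γ/3) * ((1-γ/9)⁻¹ - 1)
  have hinv3 : (1 - γ / 9)⁻¹ ≤ 9 / 7.3 := by
    rw [inv_le_iff_one_le_mul₀ hp3]
    nlinarith
  have hT3 : -(γ/3) * Real.log (1 - γ / 9) ≤ (γ/3) * ((1 - γ/9)⁻¹ - 1) := by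
    nlinarith [hl3, hpos]
  have hT3' : (γ/3) * ((1 - γ/9)⁻¹ - 1) ≤ (1.7/3) * (9/7.3 - 1) := by
    have hinvge : (1:ℝ) ≤ (1 - γ / 9)⁻¹ := by
      have hc : (1 - γ/9) * (1 - γ/9)⁻¹ = 1 := mul_inv_cancel₀ (ne_of_gt hp3)
      nlinarith [inv_pos.mpr hp3]
    nlinarith
  -- Term 4
  have hT4 : (9 + γ) / (27 - 3 * γ) ≤ 10.7 / 21.9 := by
    rw [div_le_div_iff₀ (by linarith) (by norm_num)]
    nlinarith
  -- Term 5 : (1/s) * log(1-s/3) ≤ -1/3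
  have hT5 : (1/s) * Real.log (1 - s / 3) ≤ -1/3 := by
    have h := mul_le_mul_of_nonneg_left hl5 (le_of_lt (one_div_pos.mpr hspos))
    have he : (1/s) * (-s/3) = -1/3 := by field_simp
    rw [he] at h; linarith
  -- Term 6 : -1/(3-s) ≤ -1/1.8
  have hT6 : (1:ℝ)/1.8 ≤ 1/(3 - s) := by
    apply one_div_le_one_div_of_le (by linarith) (by linarith)
  -- Term 7 : 1/(3+s) ≤ (1/s) * log(1+s/3)
  have hT7 : 1/(3 + s) ≤ (1/s) * Real.log (1 + s / 3) := by
    have h := mul_le_mul_of_nonneg_left hl7 (le_of_lt (one_div_pos.mpr hspos))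
    have he : (1/s) * (1 - (1 + s/3)⁻¹) = 1/(3 + s) := by
      field_simp
      ring
    rw [he] at h; linarith
  -- Term 8 : -1/(3+s) ≤ -1/4.31
  have hT8 : (1:ℝ)/4.31 ≤ 1/(3 + s) := by
    apply one_div_le_one_div_of_le (by linarith) (by linarith)
  linarith
end

section
/- With γ = 1.7 and p₀ = I⁰(1.7)^(1/(1.7−3)) where I⁰(1.7) is as above, one has 4·p₀^(0.7) · (9/4^(8/3)) · sin^(2/3)(π/√1.7) · sin^(4/3)((1 − 1/√1.7)·π/2) < I⁰(1.7). -/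
open Real

private lemma rpow_nat_div_key (x : ℝ) (hx : 0 ≤ x) (p q : ℕ) (hq : q ≠ 0) :
    (x ^ ((p : ℝ) / (q : ℝ))) ^ q = x ^ p := by
  rw [← Real.rpow_natCast (x ^ ((p : ℝ) / (q : ℝ))) q, ← Real.rpow_mul hx,
    div_mul_cancel₀, Real.rpow_natCast]
  exact_mod_cast hq

private lemma le_rpow_of_pow_le {x c : ℝ} (p q : ℕ) (hq : q ≠ 0) (hx : 0 ≤ x)
    (h : c ^ q ≤ x ^ p) : c ≤ x ^ ((p : ℝ) / (q : ℝ)) := by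
  refine le_of_pow_le_pow_left₀ hq (Real.rpow_nonneg hx _) ?_
  rw [rpow_nat_div_key x hx p q hq]; exact h

private lemma rpow_le_of_pow_le {x c : ℝ} (p q : ℕ) (hq : q ≠ 0) (hx : 0 ≤ x) (hc : 0 ≤ c)
    (h : x ^ p ≤ c ^ q) : x ^ ((p : ℝ) / (q : ℝ)) ≤ c := by
  refine le_of_pow_le_pow_left₀ hq hc ?_
  rw [rpow_nat_div_key x hx p q hq]; exact h

private lemma sqrt17_bounds : 1 < Real.sqrt 1.7 ∧ Real.sqrt 1.7 < 1.3039 := by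
  constructor
  · rw [show (1:ℝ) = Real.sqrt 1 by simp]
    exact Real.sqrt_lt_sqrt (by norm_num) (by norm_num)
  · rw [Real.sqrt_lt' (by norm_num)]; norm_num

private lemma I0_lower : (64 / 27 * (853 / 1000) / (474 / 1000) * (866 / 10000) : ℝ) ≤ I0 1.7 := by
  obtain ⟨hs1, hs2⟩ := sqrt17_bounds
  have hspos : (0:ℝ) < Real.sqrt 1.7 := lt_trans one_pos hs1
  set s := Real.sqrt 1.7 with hs
  unfold I0
  have hA : (853 / 1000 : ℝ) ≤ (4 * 1.7 / 9 : ℝ) ^ ((1.7 : ℝ) / 3) := by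
    have h : ((1.7 : ℝ) / 3) = ((17 : ℕ) : ℝ) / ((30 : ℕ) : ℝ) := by norm_num
    rw [h]
    exact le_rpow_of_pow_le 17 30 (by norm_num) (by norm_num) (by norm_num)
  have hBpos : (0:ℝ) < (1 - 1.7 / 9 : ℝ) ^ ((3 : ℝ) + 1.7 / 3) :=
    Real.rpow_pos_of_pos (by norm_num) _
  have hB : (1 - 1.7 / 9 : ℝ) ^ ((3 : ℝ) + 1.7 / 3) ≤ 474 / 1000 := by
    have h : ((3 : ℝ) + 1.7 / 3) = ((107 : ℕ) : ℝ) / ((30 : ℕ) : ℝ) := by norm_num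
    rw [h]
    exact rpow_le_of_pow_le 107 30 (by norm_num) (by norm_num) (by norm_num) (by norm_num)
  -- bounds for the last factor
  have hden : (0:ℝ) < 1 + s / 3 := by linarith
  have hrpos : (0:ℝ) < (1 - s / 3) / (1 + s / 3) := by
    apply div_pos _ hden; linarith
  have hr1 : (1 - s / 3) / (1 + s / 3) ≤ 1 := by
    rw [div_le_one hden]; linarith
  have hrl : (16961 / 43039 : ℝ) ≤ (1 - s / 3) / (1 + s / 3) := by
    rw [le_div_iff₀ hden]; linarith
  have hC : (866 / 10000 : ℝ) ≤ ((1 - s / 3) / (1 + s / 3)) ^ (2 * s) := by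
    have h1 : ((1 - s / 3) / (1 + s / 3)) ^ ((21 : ℝ) / 8) ≤
        ((1 - s / 3) / (1 + s / 3)) ^ (2 * s) := by
      apply Real.rpow_le_rpow_of_exponent_ge hrpos hr1; linarith
    refine le_trans ?_ h1
    have h2 : (16961 / 43039 : ℝ) ^ ((21 : ℝ) / 8) ≤
        ((1 - s / 3) / (1 + s / 3)) ^ ((21 : ℝ) / 8) :=
      Real.rpow_le_rpow (by norm_num) hrl (by norm_num)
    refine le_trans ?_ h2
    have h : ((21 : ℝ) / 8) = ((21 : ℕ) : ℝ) / ((8 : ℕ) : ℝ) := by norm_num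
    rw [h]
    exact le_rpow_of_pow_le 21 8 (by norm_num) (by norm_num) (by norm_num)
  have hK : ((4 : ℝ) / 3) ^ (3 : ℕ) = 64 / 27 := by norm_num
  rw [hK]
  calc (64 / 27 * (853 / 1000) / (474 / 1000) * (866 / 10000) : ℝ)
      ≤ 64 / 27 * (4 * 1.7 / 9 : ℝ) ^ ((1.7 : ℝ) / 3) / (474 / 1000) * (866 / 10000) := by
        have := hA; gcongr <;> norm_num
    _ ≤ 64 / 27 * (4 * 1.7 / 9 : ℝ) ^ ((1.7 : ℝ) / 3) /
          (1 - 1.7 / 9 : ℝ) ^ ((3 : ℝ) + 1.7 / 3) * (866 / 10000) := by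
        gcongr
    _ ≤ 64 / 27 * (4 * 1.7 / 9 : ℝ) ^ ((1.7 : ℝ) / 3) /
          (1 - 1.7 / 9 : ℝ) ^ ((3 : ℝ) + 1.7 / 3) * (((1 - s / 3) / (1 + s / 3)) ^ (2 * s)) := by
        gcongr

theorem stmt16 :
    4 * (I0 1.7 ^ ((1 : ℝ) / (1.7 - 3))) ^ (0.7 : ℝ) * (9 / (4 : ℝ) ^ ((8 : ℝ) / 3)) *
      Real.sin (π / Real.sqrt 1.7) ^ ((2 : ℝ) / 3) *
      Real.sin ((1 - 1 / Real.sqrt 1.7) * π / 2) ^ ((4 : ℝ) / 3) < I0 1.7 := by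
  obtain ⟨hs1, hs2⟩ := sqrt17_bounds
  have hspos : (0:ℝ) < Real.sqrt 1.7 := lt_trans one_pos hs1
  set s := Real.sqrt 1.7 with hs
  have hIl := I0_lower
  have hIpos : (0:ℝ) < I0 1.7 := lt_of_lt_of_le (by norm_num) hIl
  -- bound on the p₀ factor
  have hP : (I0 1.7 ^ ((1 : ℝ) / (1.7 - 3))) ^ (0.7 : ℝ) ≤ 1000 / 584 := by
    rw [← Real.rpow_mul hIpos.le, show ((1 : ℝ) / (1.7 - 3)) * (0.7 : ℝ) = -((7:ℝ)/13) by norm_num,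
      Real.rpow_neg hIpos.le]
    have h1 : (584 / 1000 : ℝ) ≤ (64 / 27 * (853 / 1000) / (474 / 1000) * (866 / 10000) : ℝ)
        ^ ((7:ℝ)/13) := by
      rw [show ((7:ℝ)/13) = ((7 : ℕ) : ℝ) / ((13 : ℕ) : ℝ) by norm_num]
      exact le_rpow_of_pow_le 7 13 (by norm_num) (by norm_num) (by norm_num)
    have h2 : (584 / 1000 : ℝ) ≤ I0 1.7 ^ ((7:ℝ)/13) :=
      le_trans h1 (Real.rpow_le_rpow (by norm_num) hIl (by norm_num))
    calc (I0 1.7 ^ ((7:ℝ)/13))⁻¹ ≤ ((584 : ℝ) / 1000)⁻¹ :=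
          inv_anti₀ (by norm_num) h2
      _ = 1000 / 584 := by norm_num
  have hP0 : (0:ℝ) ≤ (I0 1.7 ^ ((1 : ℝ) / (1.7 - 3))) ^ (0.7 : ℝ) :=
    Real.rpow_nonneg (Real.rpow_nonneg hIpos.le _) _
  -- bound on 9 / 4^(8/3)
  have h43 : (403 / 10 : ℝ) ≤ (4 : ℝ) ^ ((8 : ℝ) / 3) := by
    rw [show ((8:ℝ)/3) = ((8 : ℕ) : ℝ) / ((3 : ℕ) : ℝ) by norm_num]
    exact le_rpow_of_pow_le 8 3 (by norm_num) (by norm_num) (by norm_num)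
  have hE : (9 / (4 : ℝ) ^ ((8 : ℝ) / 3)) ≤ 9 / (403 / 10) := by
    gcongr
  have hE0 : (0:ℝ) ≤ 9 / (4 : ℝ) ^ ((8 : ℝ) / 3) := by positivity
  -- first sine
  have hxpos : (0:ℝ) < π / s := div_pos pi_pos hspos
  have hxlt : π / s < π := div_lt_self pi_pos hs1
  have hsin1a : (0:ℝ) ≤ Real.sin (π / s) :=
    Real.sin_nonneg_of_nonneg_of_le_pi hxpos.le hxlt.le
  have hxlb : π / 1.3039 ≤ π / s := by
    gcongr
  have hsin1b : Real.sin (π / s) ≤ 73222 / 100000 := by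
    rw [← Real.sin_pi_sub]
    have h1 : Real.sin (π - π / s) < π - π / s := Real.sin_lt (by linarith)
    have h2 : π - π / 1.3039 = (3039 / 13039) * π := by ring
    have := Real.pi_lt_d6
    nlinarith
  have hS1 : Real.sin (π / s) ^ ((2 : ℝ) / 3) ≤ 8125 / 10000 := by
    calc Real.sin (π / s) ^ ((2 : ℝ) / 3) ≤ (73222 / 100000 : ℝ) ^ ((2 : ℝ) / 3) :=
          Real.rpow_le_rpow hsin1a hsin1b (by norm_num)
      _ ≤ 8125 / 10000 := by
          rw [show ((2:ℝ)/3) = ((2 : ℕ) : ℝ) / ((3 : ℕ) : ℝ) by norm_num]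
          exact rpow_le_of_pow_le 2 3 (by norm_num) (by norm_num) (by norm_num) (by norm_num)
  have hS10 : (0:ℝ) ≤ Real.sin (π / s) ^ ((2 : ℝ) / 3) := Real.rpow_nonneg hsin1a _
  -- second sine
  have hinv : 1 / (1.3039 : ℝ) ≤ 1 / s := one_div_le_one_div_of_le hspos hs2.le
  have hinv' : 1 / s < 1 := by
    rw [div_lt_one hspos]; exact hs1
  have hzpos : (0:ℝ) < (1 - 1 / s) * π / 2 := by
    have := pi_pos
    have h1 : (0:ℝ) < 1 - 1 / s := by linarith
    positivity
  have hzub : (1 - 1 / s) * π / 2 ≤ 36611 / 100000 := by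
    have h1 : (1 - 1 / s) ≤ 3039 / 13039 := by
      have : (1:ℝ) - 1 / 1.3039 = 3039 / 13039 := by norm_num
      linarith
    have h2 : (0:ℝ) < 1 - 1 / s := by linarith [hinv']
    have := Real.pi_lt_d6
    have := pi_pos
    nlinarith
  have hsin2a : (0:ℝ) ≤ Real.sin ((1 - 1 / s) * π / 2) := by
    apply Real.sin_nonneg_of_nonneg_of_le_pi hzpos.le
    have := Real.pi_gt_three
    linarith
  have hsin2b : Real.sin ((1 - 1 / s) * π / 2) ≤ 36611 / 100000 :=
    le_trans (Real.sin_lt hzpos).le hzub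
  have hS2 : Real.sin ((1 - 1 / s) * π / 2) ^ ((4 : ℝ) / 3) ≤ 2621 / 10000 := by
    calc Real.sin ((1 - 1 / s) * π / 2) ^ ((4 : ℝ) / 3)
        ≤ (36611 / 100000 : ℝ) ^ ((4 : ℝ) / 3) :=
          Real.rpow_le_rpow hsin2a hsin2b (by norm_num)
      _ ≤ 2621 / 10000 := by
          rw [show ((4:ℝ)/3) = ((4 : ℕ) : ℝ) / ((3 : ℕ) : ℝ) by norm_num]
          exact rpow_le_of_pow_le 4 3 (by norm_num) (by norm_num) (by norm_num) (by norm_num)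
  have hS20 : (0:ℝ) ≤ Real.sin ((1 - 1 / s) * π / 2) ^ ((4 : ℝ) / 3) :=
    Real.rpow_nonneg hsin2a _
  calc 4 * (I0 1.7 ^ ((1 : ℝ) / (1.7 - 3))) ^ (0.7 : ℝ) * (9 / (4 : ℝ) ^ ((8 : ℝ) / 3)) *
      Real.sin (π / s) ^ ((2 : ℝ) / 3) * Real.sin ((1 - 1 / s) * π / 2) ^ ((4 : ℝ) / 3)
      ≤ 4 * (1000 / 584) * (9 / (403 / 10)) * (8125 / 10000) * (2621 / 10000) := by
        refine mul_le_mul (mul_le_mul (mul_le_mul (mul_le_mul le_rfl hP hP0 (by norm_num))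
          hE hE0 (by norm_num)) hS1 hS10 (by norm_num)) hS2 hS20 (by norm_num)
    _ < 64 / 27 * (853 / 1000) / (474 / 1000) * (866 / 10000) := by norm_num
    _ ≤ I0 1.7 := hIl
end
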